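/- With U_dir, U_iter, U_GenF as in the previous context, if β₀ < min{β₁ / b(1)², (b(N)² - σ²β₂) / b(N-1)²} (assuming b(1) > 0, b(N-1) > 0, and b(N)² > σ²β₂), then there exists some L with 0 < L < N such that U_GenF(L, N) < U_iter(N) and U_GenF(L, N) < U_dir(N). -/
import Mathlib


theorem genf_exists_interior (b : ℕ → ℝ) (L₁ L₂ c β₀ β₁ β₂ σ2 : ℝ)
    (hL₁ : 0 ≤ L₁) (hL₂ : 0 ≤ L₂) (hc : 0 < c) (hb1 : b 1 = c)
    (hrec : ∀ k ≥ 1, b (k + 1) = b k * (L₁ + 1 + b k * L₂))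
    (hβ₀ : 0 ≤ β₀) (hβ₁ : 0 ≤ β₁) (hβ₂ : 0 ≤ β₂) (hσ2 : 0 ≤ σ2)
    (N : ℕ) (hN : 2 ≤ N)
    (hbpos1 : 0 < b 1) (hbposN1 : 0 < b (N - 1)) (hgap : σ2 * β₂ < b N ^ 2)
    (hβ₀lt : β₀ < min (β₁ / b 1 ^ 2) ((b N ^ 2 - σ2 * β₂) / b (N - 1) ^ 2))
    (Udir Uiter : ℝ) (UGenF : ℕ → ℝ)
    (hUdir : Udir = ((N : ℝ) - 1) * β₁ + σ2 * β₂)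
    (hUiter : Uiter = b N ^ 2)
    (hUGenF : ∀ L, UGenF L = b L ^ 2 * β₀ + ((N : ℝ) - (L : ℝ) - 1) * β₁ + σ2 * β₂) :
    ∃ L, 0 < L ∧ L < N ∧ UGenF L < Uiter ∧ UGenF L < Udir := by
  have h1 : β₀ < β₁ / b 1 ^ 2 := lt_of_lt_of_le hβ₀lt (min_le_left _ _)
  have h2 : β₀ < (b N ^ 2 - σ2 * β₂) / b (N - 1) ^ 2 :=
    lt_of_lt_of_le hβ₀lt (min_le_right _ _)
  have hb1sq : 0 < b 1 ^ 2 := pow_pos hbpos1 2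
  have hbN1sq : 0 < b (N - 1) ^ 2 := pow_pos hbposN1 2
  have h1' : b 1 ^ 2 * β₀ < β₁ := by
    rw [lt_div_iff₀ hb1sq] at h1; linarith [mul_comm β₀ (b 1 ^ 2)]
  have h2' : b (N - 1) ^ 2 * β₀ < b N ^ 2 - σ2 * β₂ := by
    rw [lt_div_iff₀ hbN1sq] at h2; linarith [mul_comm β₀ (b (N - 1) ^ 2)]
  rcases le_or_gt Udir Uiter with hcase | hcase
  · -- use L = 1
    refine ⟨1, one_pos, by omega, ?_, ?_⟩
    · have : UGenF 1 < Udir := by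
        rw [hUGenF 1, hUdir]; push_cast; nlinarith
      linarith
    · rw [hUGenF 1, hUdir]; push_cast; nlinarith
  · -- use L = N - 1
    have hcast : ((N - 1 : ℕ) : ℝ) = (N : ℝ) - 1 := by
      have : (1:ℕ) ≤ N := by omega
      push_cast [Nat.cast_sub this]; ring
    have hval : UGenF (N - 1) = b (N - 1) ^ 2 * β₀ + σ2 * β₂ := by
      rw [hUGenF (N - 1), hcast]; ring
    refine ⟨N - 1, by omega, by omega, ?_, ?_⟩
    · rw [hval, hUiter]; linarith
    · have : UGenF (N - 1) < Uiter := by rw [hval, hUiter]; linarith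
      linarith
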